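/- Let V ≥ 1, let σ : ℝ^V → ℝ^V be the softmax map σ(z)_i = exp(z_i)/∑_j exp(z_j), and let L : ℝ^V → ℝ be differentiable. Then for every z ∈ ℝ^V and every index i ∈ {1,…,V}, |∂(L ∘ σ)/∂z_i (z)| ≤ 2·σ(z)_i·max_{j ∈ {1,…,V}} |(∇L(σ(z)))_j|. In particular, the magnitude of the gradient received by the i-th logit is bounded proportionally to its post-softmax probability σ(z)_i, so logits whose post-softmax probability is small cannot be updated effectively by gradient descent. -/

import Mathlib

/-! By the chain rule, `∂(L ∘ σ)/∂z_i = σ_i (g_i - ∑_j σ_j g_j)` with `g = ∇L(σ z)`, because the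
Jacobian of softmax is `∂σ_j/∂z_i = σ_j (δ_ij - σ_i)`. As `σ z` is a probability vector, the sum
`∑_j σ_j g_j` is a convex combination of the `g_j`, so both terms in the bracket are bounded by
`max_j |g_j|`. -/

noncomputable def softmax {V : ℕ} (z : EuclideanSpace ℝ (Fin V)) :
    EuclideanSpace ℝ (Fin V) :=
  WithLp.toLp 2 (fun i => Real.exp (z i) / ∑ j, Real.exp (z j))

open Real

section WeightedAverage

variable {ι : Type*} [Fintype ι] {p : ι → ℝ}

lemma abs_sum_mul_le_iSup_abs (hp : ∀ j, 0 ≤ p j) (hp1 : ∑ j, p j = 1) (g : ι → ℝ) :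
    |∑ j, p j * g j| ≤ ⨆ j, |g j| := by
  have hg : ∀ j, |g j| ≤ ⨆ j, |g j| := le_ciSup (Finite.bddAbove_range _)
  calc |∑ j, p j * g j| ≤ ∑ j, p j * |g j| := by
        refine (Finset.abs_sum_le_sum_abs _ _).trans_eq ?_
        simp only [abs_mul, abs_of_nonneg (hp _)]
    _ ≤ ∑ j, p j * ⨆ j, |g j| := by
        gcongr with j
        exacts [hp j, hg j]
    _ = ⨆ j, |g j| := by rw [← Finset.sum_mul, hp1, one_mul]

lemma abs_mul_sub_sum_mul_le (hp : ∀ j, 0 ≤ p j) (hp1 : ∑ j, p j = 1) (g : ι → ℝ) (i : ι) :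
    |p i * (g i - ∑ j, p j * g j)| ≤ 2 * p i * ⨆ j, |g j| := by
  rw [abs_mul, abs_of_nonneg (hp i), mul_comm 2, mul_assoc]
  refine mul_le_mul_of_nonneg_left ?_ (hp i)
  calc |g i - ∑ j, p j * g j| ≤ |g i| + |∑ j, p j * g j| := abs_sub _ _
    _ ≤ (⨆ j, |g j|) + ⨆ j, |g j| :=
        add_le_add (le_ciSup (f := fun j => |g j|) (Finite.bddAbove_range _) i)
          (abs_sum_mul_le_iSup_abs hp hp1 g)
    _ = 2 * ⨆ j, |g j| := (two_mul _).symm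

end WeightedAverage

section Softmax

variable {V : ℕ}

lemma softmax_apply (z : EuclideanSpace ℝ (Fin V)) (j : Fin V) :
    softmax z j = exp (z j) / ∑ k, exp (z k) := rfl

lemma softmax_nonneg (z : EuclideanSpace ℝ (Fin V)) (j : Fin V) : 0 ≤ softmax z j := by
  rw [softmax_apply]; positivity

variable [Nonempty (Fin V)]

lemma sum_exp_pos (z : EuclideanSpace ℝ (Fin V)) : 0 < ∑ k, exp (z k) :=
  Finset.sum_pos (fun _ _ => exp_pos _) Finset.univ_nonempty

lemma sum_softmax (z : EuclideanSpace ℝ (Fin V)) : ∑ j, softmax z j = 1 := by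
  simp only [softmax_apply, ← Finset.sum_div]
  exact div_self (sum_exp_pos z).ne'

lemma differentiable_softmax : Differentiable ℝ (softmax (V := V)) := by
  refine (differentiable_piLp 2).2 fun j => ?_
  simp only [softmax_apply, div_eq_mul_inv]
  have hsum : ∀ z : EuclideanSpace ℝ (Fin V), ∑ k, exp (z k) ≠ 0 := fun z => (sum_exp_pos z).ne'
  fun_prop (disch := exact hsum _)

lemma hasDerivAt_softmax_add_smul (z v : EuclideanSpace ℝ (Fin V)) :
    HasDerivAt (fun t : ℝ => softmax (z + t • v))
      (WithLp.toLp 2 fun j => softmax z j * (v j - ∑ k, softmax z k * v k)) 0 := by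
  have hexp (k : Fin V) : HasDerivAt (fun t : ℝ => exp (z k + t * v k)) (exp (z k) * v k) 0 := by
    simpa using ((hasDerivAt_mul_const (x := (0 : ℝ)) (v k)).const_add (z k)).exp
  have hcoord (j : Fin V) : HasDerivAt (fun t : ℝ => softmax (z + t • v) j)
      (softmax z j * (v j - ∑ k, softmax z k * v k)) 0 := by
    have hquot := (hexp j).fun_div (HasDerivAt.fun_sum fun k _ => hexp k)
      (by simpa using (sum_exp_pos z).ne')
    simp only [zero_mul, add_zero] at hquot
    have hfun : (fun t : ℝ => softmax (z + t • v) j) =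
        fun t => exp (z j + t * v j) / ∑ k, exp (z k + t * v k) := by
      ext t
      simp [softmax_apply]
    rw [hfun]
    refine hquot.congr_deriv ?_
    simp only [softmax_apply, div_mul_eq_mul_div, ← Finset.sum_div]
    field_simp
  exact (PiLp.hasFDerivAt_toLp 2 _).comp_hasDerivAt 0 (hasDerivAt_pi.2 hcoord)

lemma fderiv_softmax_apply (z v : EuclideanSpace ℝ (Fin V)) :
    fderiv ℝ softmax z v =
      WithLp.toLp 2 fun j => softmax z j * (v j - ∑ k, softmax z k * v k) := by
  have hline : HasDerivAt (fun t : ℝ => z + t • v) v 0 := by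
    simpa using ((hasDerivAt_id (0 : ℝ)).smul_const v).const_add z
  exact ((differentiable_softmax z).hasFDerivAt.comp_hasDerivAt_of_eq 0 hline (by simp)).unique
    (hasDerivAt_softmax_add_smul z v)

lemma fderiv_comp_softmax_single {L : EuclideanSpace ℝ (Fin V) → ℝ}
    {z : EuclideanSpace ℝ (Fin V)} (hL : DifferentiableAt ℝ L (softmax z)) (i : Fin V) :
    fderiv ℝ (fun w => L (softmax w)) z (EuclideanSpace.single i 1) =
      softmax z i * (gradient L (softmax z) i - ∑ j, softmax z j * gradient L (softmax z) j) := by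
  rw [fderiv_fun_comp z hL (differentiable_softmax z), ContinuousLinearMap.comp_apply,
    fderiv_softmax_apply, ← inner_gradient_left, PiLp.inner_apply]
  simp only [PiLp.single_apply, mul_ite, mul_one, mul_zero, Finset.sum_ite_eq', Finset.mem_univ,
    if_true, RCLike.inner_apply, conj_trivial, mul_sub, sub_mul, ite_mul, zero_mul,
    Finset.sum_sub_distrib, Finset.mul_sum]
  congr 1
  exact Finset.sum_congr rfl fun j _ => by ring

end Softmax

theorem grad_loss_softmax_bound_general (V : ℕ)
    (L : EuclideanSpace ℝ (Fin V) → ℝ) (hL : Differentiable ℝ L) :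
    ∀ (z : EuclideanSpace ℝ (Fin V)) (i : Fin V),
      |fderiv ℝ (fun w => L (softmax w)) z (EuclideanSpace.single i 1)| ≤
        2 * softmax z i * ⨆ j, |gradient L (softmax z) j| := by
  intro z i
  have : Nonempty (Fin V) := ⟨i⟩
  rw [fderiv_comp_softmax_single (hL _) i]
  exact abs_mul_sub_sum_mul_le (softmax_nonneg z) (sum_softmax z) _ i

/-- For a differentiable loss `L : ℝ^V → ℝ` composed with the softmax map `σ`, the
magnitude of the partial derivative of `L ∘ σ` with respect to the `i`-th logit is
bounded by `2 · σ(z)_i · max_j |(∇L(σ(z)))_j|`: logits with small post-softmax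
probability cannot be updated effectively by gradient descent. -/
theorem grad_loss_softmax_bound (V : ℕ) (hV : 1 ≤ V)
    (L : EuclideanSpace ℝ (Fin V) → ℝ) (hL : Differentiable ℝ L) :
    ∀ (z : EuclideanSpace ℝ (Fin V)) (i : Fin V),
      |fderiv ℝ (fun w => L (softmax w)) z (EuclideanSpace.single i 1)| ≤
        2 * softmax z i * ⨆ j, |gradient L (softmax z) j| :=
  grad_loss_softmax_bound_general V L hL
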